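/- arXiv:2302.05931 — 5 statements merged into one kernel-verified Lean document; each statement's English description precedes it below -/
import Mathlib

section
/- If t ∈ [0,1) and |w| ≤ (2/π)(t−1)+1 with w a real number satisfying 0 ≤ w < 1, then (1−t²)/(1−w²) ≤ π/2. -/
/-!
Since `0 ≤ w ≤ ℓ t` with `ℓ t = (2 / π) * (t - 1) + 1`, we have `1 - w ^ 2 ≥ 1 - (ℓ t) ^ 2`, and on the
line `w = ℓ t` the claim is the polynomial identity
`π * (1 - (ℓ t) ^ 2) - 2 * (1 - t ^ 2) = (2 / π) * (π - 2) * (1 - t) ^ 2 ≥ 0`.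
-/

open Real

lemma pi_mul_one_sub_sq_sub_two_mul_one_sub_sq (t : ℝ) :
    π * (1 - ((2 / π) * (t - 1) + 1) ^ 2) - 2 * (1 - t ^ 2) = 2 / π * (π - 2) * (1 - t) ^ 2 := by
  field_simp
  ring

lemma two_mul_one_sub_sq_le_pi_mul (t : ℝ) :
    2 * (1 - t ^ 2) ≤ π * (1 - ((2 / π) * (t - 1) + 1) ^ 2) := by
  have hgap : 0 ≤ 2 / π * (π - 2) * (1 - t) ^ 2 :=
    mul_nonneg (mul_nonneg (by positivity) (by linarith [pi_gt_three])) (sq_nonneg _)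
  linarith [pi_mul_one_sub_sq_sub_two_mul_one_sub_sq t]

theorem schwarz_pick_key_step_general (t w : ℝ)
    (hw0 : 0 ≤ w) (hw1 : w < 1) (hw : w ≤ (2 / π) * (t - 1) + 1) :
    (1 - t ^ 2) / (1 - w ^ 2) ≤ π / 2 := by
  have hden : 0 < 1 - w ^ 2 := by nlinarith
  have hsq : w ^ 2 ≤ ((2 / π) * (t - 1) + 1) ^ 2 := pow_le_pow_left₀ hw0 hw 2
  rw [div_le_iff₀ hden]
  calc 1 - t ^ 2 ≤ π / 2 * (1 - ((2 / π) * (t - 1) + 1) ^ 2) := by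
        linarith [two_mul_one_sub_sq_le_pi_mul t]
    _ ≤ π / 2 * (1 - w ^ 2) := by gcongr

theorem schwarz_pick_key_step (t w : ℝ) (ht0 : 0 ≤ t) (ht1 : t < 1)
    (hw0 : 0 ≤ w) (hw1 : w < 1) (hw : w ≤ (2 / π) * (t - 1) + 1) :
    (1 - t ^ 2) / (1 - w ^ 2) ≤ π / 2 :=
  schwarz_pick_key_step_general t w hw0 hw1 hw
end

section
/- For f(z) = 2z³z̄ − z⁵z̄³ one has, for 0 < |z|⁴ < 2/3, (|f_z(z)| + |f_{z̄}(z)|)² = 64|z|⁶(1 − |z|⁴)², and hence |Δf(z)|/(|f_z(z)| + |f_{z̄}(z)|)² → +∞ as |z| → 0⁺. -/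
open Filter

/-- The Wirtinger derivative `f_z = (1/2)(f_x - i f_y)`. -/
noncomputable def wirtingerZ (f : ℂ → ℂ) (z : ℂ) : ℂ :=
  (1 / 2) * (fderiv ℝ f z 1 - Complex.I * fderiv ℝ f z Complex.I)

/-- The Wirtinger derivative `f_z̄ = (1/2)(f_x + i f_y)`. -/
noncomputable def wirtingerZbar (f : ℂ → ℂ) (z : ℂ) : ℂ :=
  (1 / 2) * (fderiv ℝ f z 1 + Complex.I * fderiv ℝ f z Complex.I)

/-- The Laplacian `Δf = f_xx + f_yy (= 4 f_{z z̄})`. -/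
noncomputable def lap (f : ℂ → ℂ) (z : ℂ) : ℂ :=
  fderiv ℝ (fun w => fderiv ℝ f w 1) z 1 +
    fderiv ℝ (fun w => fderiv ℝ f w Complex.I) z Complex.I

open Complex ComplexConjugate

noncomputable def LM (a b : ℂ) : ℂ →L[ℝ] ℂ :=
  a • ContinuousLinearMap.id ℝ ℂ + b • (Complex.conjCLE : ℂ →L[ℝ] ℂ)

@[simp] lemma LM_apply (a b v : ℂ) : LM a b v = a * v + b * conj v := by
  simp [LM, Complex.conjCLE_apply, smul_eq_mul]

lemma hasF_pow (n : ℕ) (z : ℂ) :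
    HasFDerivAt (fun w : ℂ => w ^ n) (((n : ℂ) * z ^ (n - 1)) • ContinuousLinearMap.id ℝ ℂ) z := by
  induction n with
  | zero =>
    have h0 := hasFDerivAt_const (𝕜 := ℝ) (E := ℂ) (1 : ℂ) z
    refine h0.congr_fderiv ?_
    ext v
    simp
  | succ n ih =>
    have h := ih.mul (hasFDerivAt_id z)
    simp only [pow_succ]
    refine h.congr_fderiv ?_
    ext v
    rcases Nat.eq_zero_or_pos n with hn | hn
    · subst hn; simp
    · simp only [ContinuousLinearMap.add_apply, ContinuousLinearMap.smul_apply,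
        ContinuousLinearMap.id_apply, smul_eq_mul, id_eq, Nat.add_sub_cancel]
      have hz : z ^ (n - 1) * z = z ^ n := by
        obtain ⟨k, rfl⟩ := Nat.exists_eq_succ_of_ne_zero hn.ne'
        rw [Nat.succ_sub_one, pow_succ]
      push_cast
      rw [← hz]
      ring

lemma hasF_conj_pow (m : ℕ) (z : ℂ) :
    HasFDerivAt (fun w : ℂ => (conj w) ^ m)
      (((m : ℂ) * (conj z) ^ (m - 1)) • (Complex.conjCLE : ℂ →L[ℝ] ℂ)) z := by
  have hc : HasFDerivAt (fun w : ℂ => conj w) ((Complex.conjCLE : ℂ ≃L[ℝ] ℂ) : ℂ →L[ℝ] ℂ) z :=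
    Complex.conjCLE.hasFDerivAt
  have h := (hasF_pow m (conj z)).comp z hc
  refine h.congr_fderiv ?_
  ext v
  simp

lemma hasF_mono (c : ℂ) (n m : ℕ) (z : ℂ) :
    HasFDerivAt (fun w : ℂ => c * w ^ n * (conj w) ^ m)
      (LM (c * n * z ^ (n - 1) * (conj z) ^ m) (c * m * z ^ n * (conj z) ^ (m - 1))) z := by
  have h := ((hasF_pow n z).const_mul c).mul (hasF_conj_pow m z)
  refine h.congr_fderiv ?_
  ext v
  simp [smul_eq_mul, Complex.conjCLE_apply]
  ring

noncomputable def ff : ℂ → ℂ := fun w => 2 * w ^ 3 * (starRingEnd ℂ) w - w ^ 5 * ((starRingEnd ℂ) w) ^ 3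

lemma hasF_ff (z : ℂ) :
    HasFDerivAt ff
      (LM (6 * z ^ 2 * conj z - 5 * z ^ 4 * (conj z) ^ 3)
        (2 * z ^ 3 - 3 * z ^ 5 * (conj z) ^ 2)) z := by
  have h1 := hasF_mono 2 3 1 z
  have h2 := hasF_mono 1 5 3 z
  simp only [pow_one, one_mul] at h1 h2
  have h := h1.sub h2
  refine h.congr_fderiv ?_
  ext v
  simp only [LM_apply, ContinuousLinearMap.sub_apply]
  push_cast
  ring

lemma fderiv_ff (z v : ℂ) :
    fderiv ℝ ff z v = (6 * z ^ 2 * conj z - 5 * z ^ 4 * (conj z) ^ 3) * v +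
      (2 * z ^ 3 - 3 * z ^ 5 * (conj z) ^ 2) * conj v := by
  rw [(hasF_ff z).fderiv, LM_apply]

lemma wZ_ff (z : ℂ) : wirtingerZ ff z = 6 * z ^ 2 * conj z - 5 * z ^ 4 * (conj z) ^ 3 := by
  unfold wirtingerZ
  rw [fderiv_ff z 1, fderiv_ff z Complex.I]
  have hI : Complex.I ^ 2 = -1 := Complex.I_sq
  simp only [map_one, Complex.conj_I, mul_one]
  linear_combination (-(1/2) * (6 * z ^ 2 * conj z - 5 * z ^ 4 * (conj z) ^ 3) +
    (1/2) * (2 * z ^ 3 - 3 * z ^ 5 * (conj z) ^ 2)) * hI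

lemma wZbar_ff (z : ℂ) : wirtingerZbar ff z = 2 * z ^ 3 - 3 * z ^ 5 * (conj z) ^ 2 := by
  unfold wirtingerZbar
  rw [fderiv_ff z 1, fderiv_ff z Complex.I]
  have hI : Complex.I ^ 2 = -1 := Complex.I_sq
  simp only [map_one, Complex.conj_I, mul_one]
  linear_combination ((1/2) * (6 * z ^ 2 * conj z - 5 * z ^ 4 * (conj z) ^ 3) -
    (1/2) * (2 * z ^ 3 - 3 * z ^ 5 * (conj z) ^ 2)) * hI

lemma fderiv_ff_one :
    (fun w => fderiv ℝ ff w 1) =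
      fun w => 6 * w ^ 2 * conj w - 5 * w ^ 4 * (conj w) ^ 3 +
        (2 * w ^ 3 - 3 * w ^ 5 * (conj w) ^ 2) := by
  funext w
  rw [fderiv_ff]
  simp only [map_one, mul_one]

lemma fderiv_ff_I :
    (fun w => fderiv ℝ ff w Complex.I) =
      fun w => (6 * w ^ 2 * conj w - 5 * w ^ 4 * (conj w) ^ 3 -
        (2 * w ^ 3 - 3 * w ^ 5 * (conj w) ^ 2)) * Complex.I := by
  funext w
  rw [fderiv_ff]
  simp only [Complex.conj_I]
  ring

lemma hasF_G1 (z : ℂ) :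
    HasFDerivAt (fun w => 6 * w ^ 2 * conj w - 5 * w ^ 4 * (conj w) ^ 3 +
        (2 * w ^ 3 - 3 * w ^ 5 * (conj w) ^ 2))
      (LM (12 * z * conj z - 20 * z ^ 3 * (conj z) ^ 3 +
            (6 * z ^ 2 - 15 * z ^ 4 * (conj z) ^ 2))
          (6 * z ^ 2 - 15 * z ^ 4 * (conj z) ^ 2 - 6 * z ^ 5 * conj z)) z := by
  have h1 := hasF_mono 6 2 1 z
  have h2 := hasF_mono 5 4 3 z
  have h3 := hasF_mono 2 3 0 z
  have h4 := hasF_mono 3 5 2 z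
  simp only [pow_one, pow_zero, mul_one] at h1 h2 h3 h4
  have h := (h1.sub h2).add (h3.sub h4)
  refine h.congr_fderiv ?_
  ext v
  simp only [LM_apply, ContinuousLinearMap.sub_apply, ContinuousLinearMap.add_apply]
  push_cast
  ring

lemma hasF_G2 (z : ℂ) :
    HasFDerivAt (fun w => (6 * w ^ 2 * conj w - 5 * w ^ 4 * (conj w) ^ 3 -
        (2 * w ^ 3 - 3 * w ^ 5 * (conj w) ^ 2)) * Complex.I)
      (Complex.I • LM (12 * z * conj z - 20 * z ^ 3 * (conj z) ^ 3 -
            (6 * z ^ 2 - 15 * z ^ 4 * (conj z) ^ 2))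
          (6 * z ^ 2 - 15 * z ^ 4 * (conj z) ^ 2 + 6 * z ^ 5 * conj z)) z := by
  have h1 := hasF_mono 6 2 1 z
  have h2 := hasF_mono 5 4 3 z
  have h3 := hasF_mono 2 3 0 z
  have h4 := hasF_mono 3 5 2 z
  simp only [pow_one, pow_zero, mul_one] at h1 h2 h3 h4
  have h := ((h1.sub h2).sub (h3.sub h4)).mul_const Complex.I
  refine h.congr_fderiv ?_
  ext v
  simp only [LM_apply, ContinuousLinearMap.sub_apply, ContinuousLinearMap.add_apply,
    ContinuousLinearMap.smul_apply, smul_eq_mul]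
  push_cast
  ring

lemma lap_ff (z : ℂ) : lap ff z = 24 * z ^ 2 - 60 * z ^ 4 * (conj z) ^ 2 := by
  unfold lap
  rw [fderiv_ff_one, fderiv_ff_I, (hasF_G1 z).fderiv, (hasF_G2 z).fderiv]
  have hI : Complex.I ^ 2 = -1 := Complex.I_sq
  simp only [LM_apply, ContinuousLinearMap.smul_apply, smul_eq_mul, map_one, mul_one,
    Complex.conj_I]
  linear_combination ((12 * z * conj z - 20 * z ^ 3 * (conj z) ^ 3 -
            (6 * z ^ 2 - 15 * z ^ 4 * (conj z) ^ 2)) -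
          (6 * z ^ 2 - 15 * z ^ 4 * (conj z) ^ 2 + 6 * z ^ 5 * conj z)) * hI

lemma abs_wZ (z : ℂ) :
    norm (wirtingerZ ff z) = norm z ^ 3 * |6 - 5 * norm z ^ 4| := by
  rw [wZ_ff]
  have hzc : z * conj z = ((norm z : ℝ) : ℂ) ^ 2 := by
    rw [Complex.mul_conj]
    norm_cast
    exact (Complex.sq_norm z).symm
  have h : 6 * z ^ 2 * conj z - 5 * z ^ 4 * (conj z) ^ 3 =
      z ^ 2 * conj z * (((6 - 5 * norm z ^ 4 : ℝ)) : ℂ) := by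
    push_cast
    linear_combination (-5 * z ^ 2 * conj z *
      (z * conj z + ((norm z : ℝ) : ℂ) ^ 2)) * hzc
  rw [h, norm_mul, norm_mul, norm_pow, Complex.norm_conj, Complex.norm_real, Real.norm_eq_abs]
  ring

lemma abs_wZbar (z : ℂ) :
    norm (wirtingerZbar ff z) = norm z ^ 3 * |2 - 3 * norm z ^ 4| := by
  rw [wZbar_ff]
  have hzc : z * conj z = ((norm z : ℝ) : ℂ) ^ 2 := by
    rw [Complex.mul_conj]
    norm_cast
    exact (Complex.sq_norm z).symm
  have h : 2 * z ^ 3 - 3 * z ^ 5 * (conj z) ^ 2 =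
      z ^ 3 * (((2 - 3 * norm z ^ 4 : ℝ)) : ℂ) := by
    push_cast
    linear_combination (-3 * z ^ 3 *
      (z * conj z + ((norm z : ℝ) : ℂ) ^ 2)) * hzc
  rw [h, norm_mul, norm_pow, Complex.norm_real, Real.norm_eq_abs]

lemma abs_lap (z : ℂ) :
    norm (lap ff z) = 12 * norm z ^ 2 * |2 - 5 * norm z ^ 4| := by
  rw [lap_ff]
  have hzc : z * conj z = ((norm z : ℝ) : ℂ) ^ 2 := by
    rw [Complex.mul_conj]
    norm_cast
    exact (Complex.sq_norm z).symm
  have h : 24 * z ^ 2 - 60 * z ^ 4 * (conj z) ^ 2 =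
      ((12 : ℝ) : ℂ) * z ^ 2 * (((2 - 5 * norm z ^ 4 : ℝ)) : ℂ) := by
    push_cast
    linear_combination (-5 * 12 * z ^ 2 *
      (z * conj z + ((norm z : ℝ) : ℂ) ^ 2)) * hzc
  rw [h, norm_mul, norm_mul, norm_pow, Complex.norm_real, Complex.norm_real, Real.norm_eq_abs, Real.norm_eq_abs]
  norm_num

lemma ratio_bound (z : ℂ) (hz : z ≠ 0) (hs : norm z ^ 4 ≤ 1 / 5) :
    3 / 16 * (norm z ^ 4)⁻¹ ≤
      norm (lap ff z) /
        (norm (wirtingerZ ff z) + norm (wirtingerZbar ff z)) ^ 2 := by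
  have ha0 : 0 < norm z := norm_pos_iff.mpr hz
  set a := norm z with ha
  rw [abs_lap, abs_wZ, abs_wZbar, _root_.abs_of_nonneg (by nlinarith : (0:ℝ) ≤ 2 - 5 * a ^ 4),
    _root_.abs_of_nonneg (by nlinarith : (0:ℝ) ≤ 6 - 5 * a ^ 4),
    _root_.abs_of_nonneg (by nlinarith : (0:ℝ) ≤ 2 - 3 * a ^ 4)]
  have hfac : (1 - a ^ 4) ^ 2 ≤ 2 - 5 * a ^ 4 := by nlinarith [pow_pos ha0 4]
  have e : (3:ℝ) / 16 * (a ^ 4)⁻¹ = 3 / (16 * a ^ 4) := by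
    field_simp
  have hden : (0:ℝ) < (a ^ 3 * (6 - 5 * a ^ 4) + a ^ 3 * (2 - 3 * a ^ 4)) ^ 2 := by
    have hsum : a ^ 3 * (6 - 5 * a ^ 4) + a ^ 3 * (2 - 3 * a ^ 4) = a ^ 3 * (8 - 8 * a ^ 4) := by
      ring
    rw [hsum]
    exact pow_pos (mul_pos (pow_pos ha0 3) (by nlinarith)) 2
  rw [e, div_le_div_iff₀ (by positivity) hden]
  nlinarith [mul_le_mul_of_nonneg_left hfac (by positivity : (0:ℝ) ≤ 192 * a ^ 6),
    pow_pos ha0 6]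

theorem no_poisson_differential_inequality :
    (∀ z : ℂ, 0 < norm z ^ 4 → norm z ^ 4 < 2 / 3 →
      (norm (wirtingerZ (fun w => 2 * w ^ 3 * (starRingEnd ℂ) w -
            w ^ 5 * ((starRingEnd ℂ) w) ^ 3) z) +
        norm (wirtingerZbar (fun w => 2 * w ^ 3 * (starRingEnd ℂ) w -
            w ^ 5 * ((starRingEnd ℂ) w) ^ 3) z)) ^ 2
        = 64 * norm z ^ 6 * (1 - norm z ^ 4) ^ 2) ∧
    Tendsto (fun z : ℂ =>
        norm (lap (fun w => 2 * w ^ 3 * (starRingEnd ℂ) w -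
            w ^ 5 * ((starRingEnd ℂ) w) ^ 3) z) /
          (norm (wirtingerZ (fun w => 2 * w ^ 3 * (starRingEnd ℂ) w -
              w ^ 5 * ((starRingEnd ℂ) w) ^ 3) z) +
            norm (wirtingerZbar (fun w => 2 * w ^ 3 * (starRingEnd ℂ) w -
              w ^ 5 * ((starRingEnd ℂ) w) ^ 3) z)) ^ 2)
      (nhdsWithin 0 {0}ᶜ) atTop := by
  have hff : (fun w => 2 * w ^ 3 * (starRingEnd ℂ) w - w ^ 5 * ((starRingEnd ℂ) w) ^ 3) = ff :=
    rfl
  rw [hff]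
  constructor
  · intro z h0 h23
    have ha0 : 0 < norm z := by
      by_contra h
      push_neg at h
      have : norm z = 0 := le_antisymm h (norm_nonneg z)
      rw [this] at h0
      norm_num at h0
    rw [abs_wZ, abs_wZbar,
      _root_.abs_of_nonneg (by nlinarith : (0:ℝ) ≤ 6 - 5 * norm z ^ 4),
      _root_.abs_of_nonneg (by nlinarith : (0:ℝ) ≤ 2 - 3 * norm z ^ 4)]
    ring
  · have hc : Tendsto (fun z : ℂ => norm z ^ 4) (nhds 0) (nhds 0) := by
      exact (continuous_norm.pow 4 : Continuous fun z : ℂ => ‖z‖ ^ 4).tendsto' 0 0 (by simp)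
    have hmem : ∀ᶠ z : ℂ in nhdsWithin 0 {0}ᶜ, norm z ^ 4 ≤ 1 / 5 :=
      (hc.eventually (eventually_le_nhds (by norm_num))).filter_mono nhdsWithin_le_nhds
    have hne : ∀ᶠ z : ℂ in nhdsWithin 0 {0}ᶜ, z ≠ 0 := eventually_mem_nhdsWithin
    apply tendsto_atTop_mono' _ ((hne.and hmem).mono fun z hz => ratio_bound z hz.1 hz.2)
    have h1 : Tendsto (fun z : ℂ => norm z ^ 4) (nhdsWithin 0 {0}ᶜ)
        (nhdsWithin 0 (Set.Ioi 0)) := by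
      apply tendsto_nhdsWithin_of_tendsto_nhds_of_eventually_within
      · exact hc.mono_left nhdsWithin_le_nhds
      · exact eventually_mem_nhdsWithin.mono fun z hz => pow_pos (norm_pos_iff.mpr hz) 4
    have h2 : Tendsto (fun z : ℂ => (norm z ^ 4)⁻¹) (nhdsWithin 0 {0}ᶜ) atTop :=
      tendsto_inv_nhdsGT_zero.comp h1
    exact h2.const_mul_atTop (by norm_num)
end

section
/- Let f : 𝔻 → 𝔻 be harmonic with f(0) = 0. Then for every z ∈ 𝔻, (1 − |z|²)/(1 − |f(z)|²) ≤ π/2. -/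
open Real

/-!
Heinz's lemma after a rotation: multiplying `f` by a unimodular constant makes `f z` real and
nonnegative, so it suffices to bound the harmonic function `u = Re f`. Since `|u| < 1` and
`u 0 = 0`, `u` is the real part of a holomorphic `F` with `F 0 = 0` mapping the disk into the
strip `|Re w| < 1`, and `w ↦ tan (π w / 4)` maps that strip into the disk. The Schwarz lemma
gives `|tan (π F z / 4)| ≤ |z|`, whence `π / 4 * |u z| ≤ arctan |z|`. The resulting bound
`(1 - r²) / (1 - s²) ≤ π / 2` for `s ≤ 4 / π * arctan r` is one-variable calculus resting on
the concavity of `arctan`.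
-/

open Metric Set InnerProductSpace Laplacian

namespace Real

lemma concaveOn_arctan_Ici : ConcaveOn ℝ (Ici 0) arctan := by
  refine AntitoneOn.concaveOn_of_deriv (convex_Ici 0) continuous_arctan.continuousOn
    differentiable_arctan.differentiableOn ?_
  rw [interior_Ici, deriv_arctan]
  intro x (hx : 0 < x) y _ hxy
  dsimp only
  gcongr

lemma pi_div_four_mul_le_arctan {r : ℝ} (hr0 : 0 ≤ r) (hr1 : r ≤ 1) :
    π / 4 * r ≤ arctan r := by
  have := concaveOn_arctan_Ici.2 (mem_Ici.2 le_rfl) (mem_Ici.2 zero_le_one)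
    (sub_nonneg.2 hr1) hr0 (sub_add_cancel 1 r)
  simpa [arctan_one, mul_comm] using this

lemma one_sub_sq_le_pi_div_two_sub_arctan_sq {r : ℝ} (hr0 : 0 ≤ r) (hr1 : r ≤ 1) :
    1 - r ^ 2 ≤ π / 2 - 8 / π * arctan r ^ 2 := by
  -- `φ 1 = 0`, and `φ' ≤ 0` on `[0, 1]` because `arctan x ≥ π x / 4 ≥ π x (1 + x²) / 8`.
  set φ : ℝ → ℝ := fun r => π / 2 - 8 / π * arctan r ^ 2 - (1 - r ^ 2)
  have hφ' (x : ℝ) : HasDerivAt φ (2 * x - 16 * arctan x / (π * (1 + x ^ 2))) x := by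
    refine ((((hasDerivAt_arctan x).pow 2).const_mul (8 / π)).const_sub (π / 2) |>.sub
      ((hasDerivAt_pow 2 x).const_sub 1)).congr_deriv ?_
    field_simp
    ring
  have hanti : AntitoneOn φ (Icc 0 1) := by
    refine antitoneOn_of_deriv_nonpos (convex_Icc 0 1)
      (fun x _ => (hφ' x).continuousAt.continuousWithinAt)
      (fun x _ => (hφ' x).differentiableAt.differentiableWithinAt) ?_
    rw [interior_Icc]
    intro x ⟨hx0, hx1⟩
    have := pi_div_four_mul_le_arctan hx0.le hx1.le
    rw [(hφ' x).deriv, sub_nonpos, le_div_iff₀ (by positivity)]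
    nlinarith [mul_nonneg (mul_pos pi_pos hx0).le (by nlinarith : (0:ℝ) ≤ 1 - x ^ 2)]
  have hφ1 : φ 1 = 0 := by
    simp only [φ, arctan_one]
    field_simp
    ring
  simpa [φ, hφ1] using hanti ⟨hr0, hr1⟩ (right_mem_Icc.2 zero_le_one) hr1

lemma sin_sq_lt_cos_sq {x : ℝ} (hx : |x| < π / 4) : sin x ^ 2 < cos x ^ 2 := by
  have : 0 < cos (2 * x) :=
    cos_pos_of_mem_Ioo ⟨by linarith [neg_abs_le x], by linarith [le_abs_self x]⟩
  rw [cos_two_mul'] at this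
  linarith

lemma abs_le_arctan_of_abs_tan_le {x r : ℝ} (hx : |x| < π / 2) (h : |tan x| ≤ r) :
    |x| ≤ arctan r := by
  wlog hx0 : 0 ≤ x generalizing x
  · simpa using this (x := -x) (by rwa [abs_neg]) (by rwa [tan_neg, abs_neg]) (by linarith)
  rw [abs_of_nonneg hx0] at hx ⊢
  rw [abs_of_nonneg (tan_nonneg_of_nonneg_of_le_pi_div_two hx0 hx.le)] at h
  calc x = arctan (tan x) := (arctan_tan (by linarith) hx).symm
    _ ≤ arctan r := arctan_strictMono.monotone h

end Real

namespace Complex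

lemma normSq_sin_eq (z : ℂ) : normSq (sin z) = Real.sin z.re ^ 2 + Real.sinh z.im ^ 2 := by
  rw [sin_eq, ← ofReal_sin, ← ofReal_cosh, ← ofReal_cos, ← ofReal_sinh, ← ofReal_mul,
    ← ofReal_mul, normSq_add_mul_I]
  nlinarith [Real.cosh_sq z.im, Real.sin_sq_add_cos_sq z.re]

lemma normSq_cos_eq (z : ℂ) : normSq (cos z) = Real.cos z.re ^ 2 + Real.sinh z.im ^ 2 := by
  rw [cos_eq, ← ofReal_sin, ← ofReal_cosh, ← ofReal_cos, ← ofReal_sinh, ← ofReal_mul,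
    ← ofReal_mul, sub_eq_add_neg, ← neg_mul, ← ofReal_neg, normSq_add_mul_I]
  nlinarith [Real.cosh_sq z.im, Real.sin_sq_add_cos_sq z.re]

lemma sq_norm_tan (z : ℂ) :
    ‖tan z‖ ^ 2 = (Real.sin z.re ^ 2 + Real.sinh z.im ^ 2) /
      (Real.cos z.re ^ 2 + Real.sinh z.im ^ 2) := by
  rw [Complex.sq_norm, tan_eq_sin_div_cos, map_div₀, normSq_sin_eq, normSq_cos_eq]

lemma cos_ne_zero_of_abs_re_lt {z : ℂ} (h : |z.re| < π / 2) : cos z ≠ 0 := by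
  have hcos : 0 < Real.cos z.re :=
    Real.cos_pos_of_mem_Ioo ⟨by linarith [neg_abs_le z.re], by linarith [le_abs_self z.re]⟩
  rw [← normSq_pos, normSq_cos_eq]
  positivity

lemma norm_tan_lt_one {z : ℂ} (h : |z.re| < π / 4) : ‖tan z‖ < 1 := by
  have hsc := Real.sin_sq_lt_cos_sq h
  rw [← sq_lt_one_iff₀ (norm_nonneg _), sq_norm_tan,
    div_lt_one (by nlinarith [sq_nonneg (Real.sin z.re), sq_nonneg (Real.sinh z.im)])]
  linarith

lemma abs_tan_re_le_norm_tan {z : ℂ} (h : |z.re| < π / 4) : |Real.tan z.re| ≤ ‖tan z‖ := by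
  have hsc := Real.sin_sq_lt_cos_sq h
  have hcos : 0 < Real.cos z.re ^ 2 := by nlinarith [sq_nonneg (Real.sin z.re)]
  rw [← sq_le_sq₀ (abs_nonneg _) (norm_nonneg _), sq_abs, sq_norm_tan, Real.tan_eq_sin_div_cos,
    div_pow, div_le_div_iff₀ hcos (by positivity)]
  nlinarith [sq_nonneg (Real.sinh z.im)]

theorem pi_div_four_mul_abs_re_le_arctan_norm {F : ℂ → ℂ}
    (hF : DifferentiableOn ℂ F (ball 0 1)) (hstrip : ∀ w ∈ ball 0 1, |(F w).re| < 1)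
    (h0 : F 0 = 0) {z : ℂ} (hz : z ∈ ball 0 1) : π / 4 * |(F z).re| ≤ Real.arctan ‖z‖ := by
  have hre (w : ℂ) : |((π / 4 : ℝ) * F w).re| = π / 4 * |(F w).re| := by
    rw [re_ofReal_mul, abs_mul, abs_of_pos (by positivity)]
  have hθ : ∀ w ∈ ball 0 1, |((π / 4 : ℝ) * F w).re| < π / 4 := fun w hw => by
    rw [hre]
    nlinarith [pi_pos, hstrip w hw]
  set G : ℂ → ℂ := fun w => tan ((π / 4 : ℝ) * F w)
  have hG : DifferentiableOn ℂ G (ball 0 1) := fun w hw =>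
    ((differentiableAt_tan.2 (cos_ne_zero_of_abs_re_lt (by linarith [hθ w hw, pi_pos]))).comp w
      ((hF.differentiableAt (isOpen_ball.mem_nhds hw)).const_mul _)).differentiableWithinAt
  have hG_maps : MapsTo G (ball 0 1) (closedBall 0 1) := fun w hw =>
    mem_closedBall_zero_iff.2 (norm_tan_lt_one (hθ w hw)).le
  have hschwarz : ‖G z‖ ≤ ‖z‖ :=
    norm_le_norm_of_mapsTo_ball hG hG_maps (by simp [G, h0]) (mem_ball_zero_iff.1 hz)
  rw [← hre]
  exact Real.abs_le_arctan_of_abs_tan_le (by linarith [hθ z hz, pi_pos])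
    ((abs_tan_re_le_norm_tan (hθ z hz)).trans hschwarz)

end Complex

lemma lap_eq_laplacian {f : ℂ → ℂ} {z : ℂ} (hf : DifferentiableAt ℝ (fderiv ℝ f) z) :
    lap f z = Δ f z := by
  simp only [lap, laplacian_eq_iteratedFDeriv_complexPlane, iteratedFDeriv_two_apply]
  rw [fderiv_clm_apply hf (differentiableAt_const _),
    fderiv_clm_apply hf (differentiableAt_const _)]
  simp

lemma harmonicOnNhd_of_lap_eq_zero {f : ℂ → ℂ} {U : Set ℂ} (hU : IsOpen U)
    (hf : ContDiffOn ℝ 2 f U) (hlap : ∀ z ∈ U, lap f z = 0) : HarmonicOnNhd f U := by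
  intro z hz
  refine ⟨hf.contDiffAt (hU.mem_nhds hz), ?_⟩
  filter_upwards [hU.mem_nhds hz] with w hw
  have hf' : DifferentiableAt ℝ (fderiv ℝ f) w :=
    ((hf.contDiffAt (hU.mem_nhds hw)).fderiv_right (m := 1) le_rfl).differentiableAt one_ne_zero
  rw [← lap_eq_laplacian hf', hlap w hw, Pi.zero_apply]

namespace InnerProductSpace.HarmonicOnNhd

theorem pi_div_four_mul_abs_le_arctan_norm {u : ℂ → ℝ} (hu : HarmonicOnNhd u (ball 0 1))
    (hbound : ∀ w ∈ ball 0 1, |u w| < 1) (h0 : u 0 = 0) {z : ℂ} (hz : z ∈ ball 0 1) :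
    π / 4 * |u z| ≤ arctan ‖z‖ := by
  obtain ⟨F, hF, hFre⟩ := hu.exists_analyticOnNhd_ball_re_eq
  have hre : ∀ w ∈ ball 0 1, (F w - F 0).re = u w := fun w hw => by
    simp only [Complex.sub_re, hFre hw, hFre (mem_ball_self one_pos), h0, sub_zero]
  rw [← hre z hz]
  exact Complex.pi_div_four_mul_abs_re_le_arctan_norm
    (hF.differentiableOn.sub_const _) (fun w hw => hre w hw ▸ hbound w hw) (sub_self _) hz

theorem pi_div_four_mul_norm_le_arctan_norm {f : ℂ → ℂ} (hf : HarmonicOnNhd f (ball 0 1))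
    (hmaps : ∀ w ∈ ball 0 1, ‖f w‖ < 1) (h0 : f 0 = 0) {z : ℂ} (hz : z ∈ ball 0 1) :
    π / 4 * ‖f z‖ ≤ arctan ‖z‖ := by
  -- rotating by `c` turns `f z` into `‖f z‖`; when `f z = 0` the junk value `c = 0` still works
  set c : ℂ := starRingEnd ℂ (f z) / ‖f z‖
  have hc : ‖c‖ ≤ 1 := by
    rw [norm_div, Complex.norm_conj, Complex.norm_real, norm_norm]
    exact div_self_le_one _
  have hcz : (c * f z).re = ‖f z‖ := by
    rw [div_mul_eq_mul_div, Complex.conj_mul', ← Complex.ofReal_pow, ← Complex.ofReal_div,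
      Complex.ofReal_re, sq, mul_self_div_self]
  have hu : HarmonicOnNhd (fun w => (c * f w).re) (ball 0 1) :=
    hf.comp_CLM (Complex.reCLM.comp (ContinuousLinearMap.lsmul ℝ ℂ c))
  have hbound : ∀ w ∈ ball 0 1, |(c * f w).re| < 1 := fun w hw =>
    calc |(c * f w).re| ≤ ‖c * f w‖ := Complex.abs_re_le_norm _
      _ ≤ ‖f w‖ := by rw [norm_mul]; exact mul_le_of_le_one_left (norm_nonneg _) hc
      _ < 1 := hmaps w hw
  simpa [hcz] using hu.pi_div_four_mul_abs_le_arctan_norm hbound (by simp [h0]) hz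

end InnerProductSpace.HarmonicOnNhd

lemma one_sub_sq_div_one_sub_sq_le_pi_div_two {r s : ℝ} (hr0 : 0 ≤ r) (hr1 : r ≤ 1)
    (hs0 : 0 ≤ s) (hs1 : s < 1) (hs : π / 4 * s ≤ arctan r) :
    (1 - r ^ 2) / (1 - s ^ 2) ≤ π / 2 := by
  have hs_sq : 8 / π * (π / 4 * s) ^ 2 ≤ 8 / π * arctan r ^ 2 := by
    gcongr
  have hscale : 8 / π * (π / 4 * s) ^ 2 = π / 2 * s ^ 2 := by
    field_simp
    ring
  rw [div_le_iff₀ (by nlinarith)]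
  linarith [Real.one_sub_sq_le_pi_div_two_sub_arctan_sq hr0 hr1]

theorem harmonic_schwarz_pick (f : ℂ → ℂ)
    (hsmooth : ContDiffOn ℝ 2 f (Metric.ball (0 : ℂ) 1))
    (hharm : ∀ z ∈ Metric.ball (0 : ℂ) 1, lap f z = 0)
    (hmaps : ∀ z ∈ Metric.ball (0 : ℂ) 1, ‖f z‖ < 1)
    (h0 : f 0 = 0) :
    ∀ z ∈ Metric.ball (0 : ℂ) 1,
      (1 - ‖z‖ ^ 2) / (1 - ‖f z‖ ^ 2) ≤ π / 2 := by
  intro z hz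
  have hf : HarmonicOnNhd f (ball 0 1) := harmonicOnNhd_of_lap_eq_zero isOpen_ball hsmooth hharm
  exact one_sub_sq_div_one_sub_sq_le_pi_div_two (norm_nonneg z) (mem_ball_zero_iff.1 hz).le
    (norm_nonneg _) (hmaps z hz) (hf.pi_div_four_mul_norm_le_arctan_norm hmaps h0 hz)
end

section
/- Suppose a, b, M ≥ 0, and for all z ∈ 𝔻, |f(z)| ≤ (4/π)arctan|z| + ((1−|z|²)/(1+|z|²))(b + |z|²a) + (4/π)a(1−|z|²)arctan|z| + b(1−|z|²)². If additionally |f(z)| < 1 and 2/π − 4(a+b) > 0, then (1−|z|)/(1−|f(z)|) ≤ 1/(2/π − 4(a+b)) for all z ∈ 𝔻. -/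
/-!
Write `r = |z|`. Since `arctan' = 1/(1 + x²) ≥ 1/2` on `[r, 1]`, we get
`arctan r ≤ π/4 - (1 - r)/2`, so the leading term `(4/π) arctan r` of the bound is at most
`1 - (2/π)(1 - r)`. Every remaining term carries a factor `1 - r² ≤ 2(1 - r)` and together they
contribute at most `4(a + b)(1 - r)`. Hence `1 - |f(z)| ≥ (1 - r)(2/π - 4(a + b))`.
-/

open Real

theorem arctan_le_pi_div_four_sub {r : ℝ} (hr₀ : -1 ≤ r) (hr₁ : r ≤ 1) :
    arctan r ≤ π / 4 - (1 - r) / 2 := by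
  have h : ∫ x in r..1, (1 : ℝ) / 2 ≤ ∫ x in r..1, (1 : ℝ) / (1 + x ^ 2) := by
    refine intervalIntegral.integral_mono_on hr₁ intervalIntegrable_const
      intervalIntegral.intervalIntegrable_one_div_one_add_sq fun x hx => ?_
    rw [div_le_div_iff₀ two_pos (by positivity)]
    nlinarith [hx.1, hx.2]
  rw [intervalIntegral.integral_const, integral_one_div_one_add_sq, arctan_one,
    smul_eq_mul] at h
  linarith

theorem arctan_le_pi_div_four {r : ℝ} (hr : r ≤ 1) : arctan r ≤ π / 4 :=
  arctan_one ▸ arctan_mono hr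

theorem four_div_pi_mul_arctan_le {r : ℝ} (hr₀ : -1 ≤ r) (hr₁ : r ≤ 1) :
    4 / π * arctan r ≤ 1 - 2 / π * (1 - r) :=
  calc 4 / π * arctan r ≤ 4 / π * (π / 4 - (1 - r) / 2) :=
        mul_le_mul_of_nonneg_left (arctan_le_pi_div_four_sub hr₀ hr₁) (by positivity)
    _ = 1 - 2 / π * (1 - r) := by field_simp; ring

noncomputable def schwarzPickBound (a b r : ℝ) : ℝ :=
  4 / π * arctan r + (1 - r ^ 2) / (1 + r ^ 2) * (b + r ^ 2 * a) +
    4 / π * a * (1 - r ^ 2) * arctan r + b * (1 - r ^ 2) ^ 2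

theorem schwarzPickBound_sub_le {a b r : ℝ} (ha : 0 ≤ a) (hb : 0 ≤ b) (hr₀ : 0 ≤ r)
    (hr₁ : r ≤ 1) : schwarzPickBound a b r - 4 / π * arctan r ≤ 4 * (a + b) * (1 - r) := by
  rw [schwarzPickBound]
  set s := 1 - r ^ 2
  have hs₀ : 0 ≤ s := by nlinarith
  have hs₁ : s ≤ 1 := by nlinarith
  have h₁ : s / (1 + r ^ 2) * (b + r ^ 2 * a) ≤ s * (a + b) :=
    mul_le_mul (div_le_self hs₀ (by nlinarith)) (by nlinarith) (by positivity) hs₀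
  have h₂ : 4 / π * a * s * arctan r ≤ a * s := by
    have : 4 / π * arctan r ≤ 1 := by
      rw [div_mul_eq_mul_div, div_le_one pi_pos]
      linarith [arctan_le_pi_div_four hr₁]
    calc 4 / π * a * s * arctan r = a * s * (4 / π * arctan r) := by ring
      _ ≤ a * s := mul_le_of_le_one_right (by positivity) this
  have h₃ : b * s ^ 2 ≤ b * s := by
    rw [sq]; exact mul_le_mul_of_nonneg_left (mul_le_of_le_one_left hs₀ hs₁) hb
  have h₄ : s * (a + b) ≤ 2 * (1 - r) * (a + b) :=
    mul_le_mul_of_nonneg_right (by nlinarith) (add_nonneg ha hb)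
  linarith

theorem schwarzPickBound_le {a b r : ℝ} (ha : 0 ≤ a) (hb : 0 ≤ b) (hr₀ : 0 ≤ r) (hr₁ : r ≤ 1) :
    schwarzPickBound a b r ≤ 1 - (1 - r) * (2 / π - 4 * (a + b)) := by
  linarith [four_div_pi_mul_arctan_le (by linarith) hr₁, schwarzPickBound_sub_le ha hb hr₀ hr₁]

theorem schwarz_pick_q_one (f : ℂ → ℂ) (a b : ℝ) (ha : 0 ≤ a) (hb : 0 ≤ b)
    (hbound : ∀ z ∈ Metric.ball (0 : ℂ) 1,
      ‖f z‖ ≤ (4 / π) * Real.arctan (‖z‖) +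
        ((1 - ‖z‖ ^ 2) / (1 + ‖z‖ ^ 2)) * (b + ‖z‖ ^ 2 * a) +
        (4 / π) * a * (1 - ‖z‖ ^ 2) * Real.arctan (‖z‖) +
        b * (1 - ‖z‖ ^ 2) ^ 2)
    (hlt : ∀ z ∈ Metric.ball (0 : ℂ) 1, ‖f z‖ < 1)
    (hc : 0 < 2 / π - 4 * (a + b)) :
    ∀ z ∈ Metric.ball (0 : ℂ) 1,
      (1 - ‖z‖) / (1 - ‖f z‖)
        ≤ 1 / (2 / π - 4 * (a + b)) := by
  intro z hz
  have hF : ‖f z‖ ≤ 1 - (1 - ‖z‖) * (2 / π - 4 * (a + b)) :=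
    (hbound z hz).trans
      (schwarzPickBound_le ha hb (norm_nonneg z) (mem_ball_zero_iff.1 hz).le)
  rw [div_le_div_iff₀ (sub_pos.2 (hlt z hz)) hc]
  linarith
end

section
/- Let f : 𝔻 → 𝔻 satisfy: (i) there is M₁ ≥ 2/π with |f(z₁)−f(z₂)| ≤ M₁|z₁−z₂| for all z₁,z₂ ∈ 𝔻, and (ii) there is c > 0 with (1−|z|)/(1−|f(z)|) ≤ 1/c for all z ∈ 𝔻. Then for all z₁, z₂ ∈ 𝔻, j(f(z₁), f(z₂)) ≤ (M₁/c)·j(z₁, z₂), where j(w₁,w₂) = log(1 + |w₁−w₂|/min(1−|w₁|, 1−|w₂|)) is the distance ratio metric on 𝔻. -/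
/-!
Write `m = min (1 - ‖z₁‖) (1 - ‖z₂‖)` and `t = ‖z₁ - z₂‖ ≤ 2 (1 - m)`. The hypotheses give
`‖f z₁ - f z₂‖ ≤ M₁ t`, and the smaller of `1 - ‖f z₁‖`, `1 - ‖f z₂‖` is at least both `c m`
and, comparing with `f 0`, `c - M₁ + M₁ m`.

If `c ≤ M₁`, the bound `c m` and Bernoulli's inequality `log (1 + λx) ≤ λ log (1 + x)`
(`λ = M₁ / c ≥ 1`) finish. If `M₁ ≤ c`, put `w = M₁ / c ≤ 1`; the bound `c - M₁ + M₁ m` reduces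
the claim to `φ (m + t) ≤ φ m` for `φ x = log ((1 - w) + w x) - w log x`, the logarithm of the
ratio of the weighted arithmetic and geometric means of `1` and `x`. Its derivative is
`w (1 - w) (x - 1) / (x ((1 - w) + w x))`, so `φ` decreases on `(0, 1]` and increases on
`[1, ∞)`; on `[m, 2 - m] ∋ m + t` it is therefore largest at an endpoint, and `φ (2 - m) ≤ φ m`
is `artanh (w s) ≤ w artanh s` for `s = 1 - m`, which holds termwise in the odd power series of
`artanh`.
-/

open Real Set

lemma log_one_add_mul_le_mul_log_one_add {p x : ℝ} (hp : 1 ≤ p) (hx : 0 ≤ x) :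
    log (1 + p * x) ≤ p * log (1 + x) :=
  calc log (1 + p * x) ≤ log ((1 + x) ^ p) :=
        log_le_log (by positivity) (one_add_mul_self_le_rpow_one_add (by linarith) hp)
    _ = p * log (1 + x) := log_rpow (by linarith) p

lemma log_one_add_mul_sub_log_one_sub_mul_le {w s : ℝ} (hw0 : 0 ≤ w) (hw1 : w ≤ 1)
    (hs0 : 0 ≤ s) (hs1 : s < 1) :
    log (1 + w * s) - log (1 - w * s) ≤ w * (log (1 + s) - log (1 - s)) := by
  have hws : |w * s| < 1 := by
    rw [abs_of_nonneg (by positivity)]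
    nlinarith
  refine hasSum_le (fun k => ?_) (hasSum_log_sub_log_of_abs_lt_one hws)
    ((hasSum_log_sub_log_of_abs_lt_one (by rwa [abs_of_nonneg hs0])).mul_left w)
  have hpow : w ^ (2 * k + 1) ≤ w := pow_le_of_le_one hw0 hw1 (by omega)
  rw [mul_pow]
  have : 0 ≤ 2 * (1 / (2 * (k : ℝ) + 1)) * s ^ (2 * k + 1) := by positivity
  nlinarith

noncomputable def logAmGmRatio (w x : ℝ) : ℝ :=
  log (1 - w + w * x) - w * log x

section logAmGmRatio

variable {w : ℝ}

lemma one_sub_add_mul_pos (hw0 : 0 ≤ w) (hw1 : w ≤ 1) {x : ℝ} (hx : 0 < x) :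
    0 < 1 - w + w * x := by
  rcases le_total x 1 with h | h <;> nlinarith

lemma hasDerivAt_logAmGmRatio (hw0 : 0 ≤ w) (hw1 : w ≤ 1) {x : ℝ} (hx : 0 < x) :
    HasDerivAt (logAmGmRatio w) (w * (1 - w) * (x - 1) / (x * (1 - w + w * x))) x := by
  have hmean := (one_sub_add_mul_pos hw0 hw1 hx).ne'
  refine (((((hasDerivAt_id x).const_mul w).const_add (1 - w)).log hmean).sub
    ((hasDerivAt_log hx.ne').const_mul w)).congr_deriv ?_
  simp only [id]
  field_simp
  ring

lemma antitoneOn_logAmGmRatio (hw0 : 0 ≤ w) (hw1 : w ≤ 1) :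
    AntitoneOn (logAmGmRatio w) (Ioc 0 1) := by
  refine antitoneOn_of_hasDerivWithinAt_nonpos (convex_Ioc 0 1)
    (fun x hx => (hasDerivAt_logAmGmRatio hw0 hw1 hx.1).continuousAt.continuousWithinAt)
    (fun x hx => (hasDerivAt_logAmGmRatio hw0 hw1 (interior_subset hx).1).hasDerivWithinAt)
    (fun x hx => ?_)
  rw [interior_Ioc] at hx
  have hmean := one_sub_add_mul_pos hw0 hw1 hx.1
  exact div_nonpos_of_nonpos_of_nonneg
    (mul_nonpos_of_nonneg_of_nonpos (by nlinarith) (by linarith [hx.2]))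
    (mul_pos hx.1 hmean).le

lemma monotoneOn_logAmGmRatio (hw0 : 0 ≤ w) (hw1 : w ≤ 1) :
    MonotoneOn (logAmGmRatio w) (Ici 1) := by
  refine monotoneOn_of_hasDerivWithinAt_nonneg (convex_Ici 1)
    (fun x hx => (hasDerivAt_logAmGmRatio hw0 hw1
      (zero_lt_one.trans_le hx)).continuousAt.continuousWithinAt)
    (fun x hx => (hasDerivAt_logAmGmRatio hw0 hw1
      (zero_lt_one.trans_le (interior_subset hx))).hasDerivWithinAt)
    (fun x hx => ?_)
  rw [interior_Ici] at hx
  have hx0 : 0 < x := zero_lt_one.trans hx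
  have hmean := one_sub_add_mul_pos hw0 hw1 hx0
  exact div_nonneg (mul_nonneg (by nlinarith) (by linarith [mem_Ioi.1 hx])) (by positivity)

lemma logAmGmRatio_one_add_le_one_sub (hw0 : 0 ≤ w) (hw1 : w ≤ 1) {s : ℝ} (hs0 : 0 ≤ s)
    (hs1 : s < 1) : logAmGmRatio w (1 + s) ≤ logAmGmRatio w (1 - s) := by
  have := log_one_add_mul_sub_log_one_sub_mul_le hw0 hw1 hs0 hs1
  simp only [logAmGmRatio]
  ring_nf at this ⊢
  linarith

lemma logAmGmRatio_le_of_le_of_le_two_sub (hw0 : 0 ≤ w) (hw1 : w ≤ 1) {u v : ℝ} (hv : 0 < v)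
    (hvu : v ≤ u) (hu : u ≤ 2 - v) : logAmGmRatio w u ≤ logAmGmRatio w v := by
  rcases le_total u 1 with hu1 | hu1
  · exact antitoneOn_logAmGmRatio hw0 hw1 ⟨hv, hvu.trans hu1⟩ ⟨hv.trans_le hvu, hu1⟩ hvu
  · calc logAmGmRatio w u ≤ logAmGmRatio w (1 + (1 - v)) :=
          monotoneOn_logAmGmRatio hw0 hw1 hu1 (show (1 : ℝ) ≤ 1 + (1 - v) by linarith)
            (by linarith)
      _ ≤ logAmGmRatio w (1 - (1 - v)) :=
          logAmGmRatio_one_add_le_one_sub hw0 hw1 (by linarith) (by linarith)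
      _ = logAmGmRatio w v := by rw [sub_sub_cancel]

end logAmGmRatio

lemma log_one_add_div_le_of_le_mul {M c m t a d : ℝ} (hc : 0 < c) (hcM : c ≤ M) (hm : 0 < m)
    (ht : 0 ≤ t) (ha0 : 0 ≤ a) (ha : a ≤ M * t) (hd : c * m ≤ d) :
    log (1 + a / d) ≤ M / c * log (1 + t / m) := by
  have hd0 : 0 < d := (mul_pos hc hm).trans_le hd
  calc log (1 + a / d) ≤ log (1 + M / c * (t / m)) := by
        gcongr
        rw [div_mul_div_comm]
        exact div_le_div₀ (mul_nonneg (hc.le.trans hcM) ht) ha (by positivity) hd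
    _ ≤ M / c * log (1 + t / m) :=
        log_one_add_mul_le_mul_log_one_add ((one_le_div hc).2 hcM) (by positivity)

lemma log_one_add_mul_div_le_mul_log_one_add_div {w m t : ℝ} (hw0 : 0 ≤ w) (hw1 : w ≤ 1)
    (hm : 0 < m) (ht : 0 ≤ t) (ht2 : t ≤ 2 * (1 - m)) :
    log (1 + w * t / (1 - w + w * m)) ≤ w * log (1 + t / m) := by
  have hmean := one_sub_add_mul_pos hw0 hw1 hm
  have hmean' := one_sub_add_mul_pos hw0 hw1 (by linarith : 0 < m + t)
  calc log (1 + w * t / (1 - w + w * m))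
        = log (1 - w + w * (m + t)) - log (1 - w + w * m) := by
        rw [← log_div hmean'.ne' hmean.ne']
        congr 1
        field_simp
        ring
    _ ≤ w * log (m + t) - w * log m := by
        have := logAmGmRatio_le_of_le_of_le_two_sub hw0 hw1 hm (u := m + t) (by linarith)
          (by linarith)
        simp only [logAmGmRatio] at this
        linarith
    _ = w * log (1 + t / m) := by
        rw [← mul_sub, ← log_div (by linarith) hm.ne', add_div, div_self hm.ne']

lemma log_one_add_div_le_of_mul_le {M c m t a d : ℝ} (hM : 0 ≤ M) (hMc : M ≤ c) (hc : 0 < c)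
    (hm : 0 < m) (ht : 0 ≤ t) (ht2 : t ≤ 2 * (1 - m)) (ha0 : 0 ≤ a) (ha : a ≤ M * t)
    (hd : c - M + M * m ≤ d) :
    log (1 + a / d) ≤ M / c * log (1 + t / m) := by
  have hw0 : 0 ≤ M / c := div_nonneg hM hc.le
  have hw1 : M / c ≤ 1 := (div_le_one hc).2 hMc
  have hE : c - M + M * m = c * (1 - M / c + M / c * m) := by field_simp
  have hmean := one_sub_add_mul_pos hw0 hw1 hm
  have hE0 : 0 < c - M + M * m := by rw [hE]; positivity
  have hd0 : 0 < d := hE0.trans_le hd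
  calc log (1 + a / d) ≤ log (1 + M / c * t / (1 - M / c + M / c * m)) := by
        gcongr log (1 + ?_)
        calc a / d ≤ M * t / (c - M + M * m) := div_le_div₀ (by positivity) ha hE0 hd
          _ = M / c * t / (1 - M / c + M / c * m) := by rw [hE]; field_simp
    _ ≤ M / c * log (1 + t / m) :=
        log_one_add_mul_div_le_mul_log_one_add_div hw0 hw1 hm ht ht2

theorem lipschitz_distance_ratio_metric (f : ℂ → ℂ) (M₁ c : ℝ)
    (hM₁ : 2 / π ≤ M₁) (hc : 0 < c)
    (hmaps : ∀ z ∈ Metric.ball (0 : ℂ) 1, ‖f z‖ < 1)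
    (hlip : ∀ z₁ ∈ Metric.ball (0 : ℂ) 1, ∀ z₂ ∈ Metric.ball (0 : ℂ) 1,
      ‖f z₁ - f z₂‖ ≤ M₁ * ‖z₁ - z₂‖)
    (hratio : ∀ z ∈ Metric.ball (0 : ℂ) 1,
      (1 - ‖z‖) / (1 - ‖f z‖) ≤ 1 / c) :
    ∀ z₁ ∈ Metric.ball (0 : ℂ) 1, ∀ z₂ ∈ Metric.ball (0 : ℂ) 1,
      Real.log (1 + ‖f z₁ - f z₂‖ /
          min (1 - ‖f z₁‖) (1 - ‖f z₂‖))
        ≤ (M₁ / c) *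
          Real.log (1 + ‖z₁ - z₂‖ /
            min (1 - ‖z₁‖) (1 - ‖z₂‖)) := by
  intro z₁ hz₁ z₂ hz₂
  have hM : 0 ≤ M₁ := le_trans (by positivity) hM₁
  have hscaled : ∀ z ∈ Metric.ball (0 : ℂ) 1, c * (1 - ‖z‖) ≤ 1 - ‖f z‖ := fun z hz => by
    have := hratio z hz
    rwa [div_le_div_iff₀ (by linarith [hmaps z hz]) hc, one_mul, mul_comm] at this
  have h0 : (0 : ℂ) ∈ Metric.ball (0 : ℂ) 1 := Metric.mem_ball_self one_pos
  -- Comparing with `f 0`: `1 - ‖f z‖ ≥ (1 - ‖f 0‖) - ‖f z - f 0‖ ≥ c - M₁ ‖z‖`.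
  have hshift : ∀ z ∈ Metric.ball (0 : ℂ) 1, c - M₁ + M₁ * (1 - ‖z‖) ≤ 1 - ‖f z‖ := by
    intro z hz
    have h₀ := hscaled 0 h0
    have hf := hlip z hz 0 h0
    simp only [norm_zero, sub_zero] at h₀ hf
    linarith [norm_le_norm_sub_add (f z) (f 0)]
  set m := min (1 - ‖z₁‖) (1 - ‖z₂‖)
  have hm₁ : m ≤ 1 - ‖z₁‖ := min_le_left _ _
  have hm₂ : m ≤ 1 - ‖z₂‖ := min_le_right _ _
  have hm : 0 < m :=
    lt_min (by linarith [mem_ball_zero_iff.1 hz₁]) (by linarith [mem_ball_zero_iff.1 hz₂])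
  rcases le_total c M₁ with hcM | hMc
  · exact log_one_add_div_le_of_le_mul hc hcM hm (norm_nonneg _) (norm_nonneg _)
      (hlip z₁ hz₁ z₂ hz₂)
      (le_min (by nlinarith [hscaled z₁ hz₁]) (by nlinarith [hscaled z₂ hz₂]))
  · exact log_one_add_div_le_of_mul_le hM hMc hc hm (norm_nonneg _)
      (by linarith [norm_sub_le z₁ z₂]) (norm_nonneg _) (hlip z₁ hz₁ z₂ hz₂)
      (le_min (by nlinarith [hshift z₁ hz₁]) (by nlinarith [hshift z₂ hz₂]))
end
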